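/- Let E be a barrelled locally convex Hausdorff topological vector space over ℂ in which every bounded subset is relatively compact in the weak topology σ(E,E′) (i.e. E is reflexive), and let T : E → E be a continuous linear operator. Then T is mean ergodic if and only if T is Cesàro bounded and lim_{n→∞} (1/n)·Tⁿx = 0 for every x ∈ E. -/

import Mathlib

/-!
Write `Aₙ` for the `n`-th Cesàro mean. If `Aₙ x → P x` for all `x`, the orbits `(Aₙ x)` are bounded,
so the barrelledness of `E` makes `(Aₙ)` equicontinuous, and
`Tⁿ⁺¹ x / (n + 1) = Aₙ₊₁ x - (n / (n + 1)) Aₙ x → P x - P x = 0`.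

Conversely, `Aₙ (x - T x) = T (n⁻¹ (x - Tⁿ x)) → 0`, so `Aₙ → 0` pointwise on the range of `1 - T`
and, by equicontinuity, on its closure. The orbit of `x` is bounded, hence by reflexivity has a weak
cluster point `y`. Since `T Aₙ x - Aₙ x → 0`, `y` is fixed by `T`; since `x - Aₙ x` lies in the
range of `1 - T`, `x - y` lies in its weak closure, which by Mazur's theorem is its closure.
Therefore `Aₙ x = Aₙ (x - y) + y → y`, and the pointwise limit is a continuous linear operator
by equicontinuity.
-/

open Filter Topology Bornology Set
open scoped Uniformity Pointwise

/-- The `n`-th Cesàro mean of `T` applied to `x`: `(1/n) ∑_{m=1}^{n} Tᵐ x`. -/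
noncomputable def cesaroMean {E : Type*} [AddCommGroup E] [Module ℂ E] [TopologicalSpace E]
    (T : E →L[ℂ] E) (n : ℕ) (x : E) : E :=
  (n : ℂ)⁻¹ • ∑ m ∈ Finset.Icc 1 n, (T ^ m) x

theorem sum_Icc_pow_mul_one_sub {R : Type*} [Ring R] (x : R) (n : ℕ) :
    (∑ m ∈ Finset.Icc 1 n, x ^ m) * (1 - x) = x * (1 - x ^ n) := by
  induction n with
  | zero => simp
  | succ n ih =>
    rw [Finset.sum_Icc_succ_top (by omega), add_mul, ih]
    simp only [mul_sub, mul_one, ← pow_succ, ← pow_succ']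
    abel

theorem SeparatingDual.of_real {𝕜 F : Type*} [RCLike 𝕜] [TopologicalSpace F] [AddCommGroup F]
    [Module 𝕜 F] [ContinuousConstSMul 𝕜 F] [Module ℝ F] [IsScalarTower ℝ 𝕜 F]
    [SeparatingDual ℝ F] : SeparatingDual 𝕜 F :=
  ⟨fun x hx => by
    obtain ⟨f, hf⟩ := SeparatingDual.exists_ne_zero (R := ℝ) hx
    exact ⟨f.extendRCLike, fun h => hf (by simpa using congrArg RCLike.re h)⟩⟩

theorem Equicontinuous.isVonNBounded_range_apply {𝕜 ι E F : Type*} [NontriviallyNormedField 𝕜]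
    [AddCommGroup E] [Module 𝕜 E] [TopologicalSpace E] [ContinuousSMul 𝕜 E]
    [AddCommGroup F] [Module 𝕜 F] [UniformSpace F] [IsUniformAddGroup F]
    {A : ι → E →L[𝕜] F} (hA : Equicontinuous fun i => ⇑(A i)) (x : E) :
    IsVonNBounded 𝕜 (range fun i => A i x) := by
  intro V hV
  have hW : {w : E | ∀ i, A i w ∈ V} ∈ 𝓝 0 := by
    have hV' : {p : F × F | p.2 - p.1 ∈ V} ∈ 𝓤 F := by
      rw [uniformity_eq_comap_nhds_zero F]
      exact preimage_mem_comap hV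
    filter_upwards [hA 0 _ hV'] with w hw i
    simpa using hw i
  filter_upwards [absorbent_nhds_zero hW x] with c hc
  rintro - ⟨i, rfl⟩
  obtain ⟨w, hw, rfl⟩ := hc rfl
  show A i (c • w) ∈ c • V
  rw [map_smul]
  exact smul_mem_smul_set (hw i)

theorem Equicontinuous.exists_continuousLinearMap_of_tendsto {𝕜 ι E F : Type*} [Semiring 𝕜]
    [AddCommMonoid E] [Module 𝕜 E] [TopologicalSpace E]
    [AddCommMonoid F] [Module 𝕜 F] [UniformSpace F] [T2Space F] [ContinuousAdd F]
    [ContinuousConstSMul 𝕜 F] {l : Filter ι} [l.NeBot] {A : ι → E →L[𝕜] F}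
    (hA : Equicontinuous fun i => ⇑(A i)) (h : ∀ x, ∃ y, Tendsto (fun i => A i x) l (𝓝 y)) :
    ∃ P : E →L[𝕜] F, ∀ x, Tendsto (fun i => A i x) l (𝓝 (P x)) := by
  choose p hp using h
  have hp' : Tendsto (fun i x => A i x) l (𝓝 p) := tendsto_pi_nhds.2 hp
  exact ⟨⟨linearMapOfTendsto p (fun i => (A i : E →ₗ[𝕜] F)) hp',
    hp'.continuous_of_equicontinuous hA⟩, hp⟩

section WeakClusterPt

variable {𝕜 ι E F : Type*} [RCLike 𝕜] [AddCommGroup E] [Module 𝕜 E] [TopologicalSpace E]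
  {l : Filter ι} {u : ι → E} {y : E}

theorem eq_of_mapClusterPt_toWeakSpace_of_tendsto
    [AddCommGroup F] [Module 𝕜 F] [TopologicalSpace F] [SeparatingDual 𝕜 F]
    (hy : MapClusterPt (toWeakSpace 𝕜 E y) l (toWeakSpace 𝕜 E ∘ u)) {S : E →L[𝕜] F} {z : F}
    (hS : Tendsto (S ∘ u) l (𝓝 z)) : S y = z := by
  have hSy : MapClusterPt (toWeakSpace 𝕜 F (S y)) l (toWeakSpace 𝕜 F ∘ S ∘ u) :=
    hy.continuousAt_comp (f := WeakSpace.map S) (WeakSpace.map S).continuous.continuousAt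
  have hSz : Tendsto (toWeakSpace 𝕜 F ∘ S ∘ u) l (𝓝 (toWeakSpace 𝕜 F z)) :=
    ((toWeakSpaceCLM 𝕜 F).continuous.tendsto z).comp hS
  exact (toWeakSpace 𝕜 F).injective (eq_of_nhds_neBot (ClusterPt.mono hSy hSz))

theorem mem_closure_of_mapClusterPt_toWeakSpace [Module ℝ E] [IsScalarTower ℝ 𝕜 E]
    [IsTopologicalAddGroup E] [ContinuousSMul 𝕜 E] [LocallyConvexSpace ℝ E]
    (hy : MapClusterPt (toWeakSpace 𝕜 E y) l (toWeakSpace 𝕜 E ∘ u)) {s : Set E}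
    (hs : Convex ℝ s) (hu : ∀ᶠ i in l, u i ∈ s) : y ∈ closure s := by
  have hy' : toWeakSpace 𝕜 E y ∈ closure (toWeakSpace 𝕜 E '' s) :=
    mem_closure_iff_clusterPt.2 <| ClusterPt.mono hy <|
      le_principal_iff.2 <| mem_map.2 <| hu.mono fun i hi => mem_image_of_mem _ hi
  rw [← hs.toWeakSpace_closure 𝕜] at hy'
  obtain ⟨y', hy's, hy'y⟩ := hy'
  exact (toWeakSpace 𝕜 E).injective hy'y ▸ hy's

end WeakClusterPt

section Cesaro

variable {E : Type*} [AddCommGroup E] [Module ℂ E] [TopologicalSpace E] (T : E →L[ℂ] E)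

theorem apply_cesaroMean (n : ℕ) (x : E) : T (cesaroMean T n x) = cesaroMean T n (T x) := by
  simp only [cesaroMean, map_smul, map_sum, ← mul_apply_eq_comp, (Commute.self_pow T _).eq]

variable [IsTopologicalAddGroup E]

theorem cesaroMean_sub_apply (n : ℕ) (x : E) :
    cesaroMean T n (x - T x) = T ((n : ℂ)⁻¹ • (x - (T ^ n) x)) := by
  have h := congrArg (fun S : E →L[ℂ] E => S x) (sum_Icc_pow_mul_one_sub T n)
  simp only [mul_apply_eq_comp, sub_apply, one_apply_eq_self, sum_apply] at h
  rw [cesaroMean, h, map_smul]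

theorem cesaroMean_add_one_sub_smul_cesaroMean (n : ℕ) (x : E) :
    cesaroMean T (n + 1) x - ((n : ℂ) / (n + 1)) • cesaroMean T n x
      = ((n : ℂ) + 1)⁻¹ • (T ^ (n + 1)) x := by
  have h : ((n : ℂ) / (n + 1)) • cesaroMean T n x
      = ((n : ℂ) + 1)⁻¹ • ∑ m ∈ Finset.Icc 1 n, (T ^ m) x := by
    rcases eq_or_ne n 0 with rfl | hn
    · simp [cesaroMean]
    · rw [cesaroMean, smul_smul]
      congr 1
      field_simp
  rw [h, cesaroMean, Finset.sum_Icc_succ_top (by omega), smul_add]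
  push_cast
  abel

theorem cesaroMean_of_apply_eq {y : E} (hy : T y = y) {n : ℕ} (hn : n ≠ 0) :
    cesaroMean T n y = y := by
  simp only [cesaroMean, pow_apply_eq_iterate, Function.iterate_fixed hy, Finset.sum_const,
    Nat.card_Icc, add_tsub_cancel_right, ← Nat.cast_smul_eq_nsmul ℂ]
  exact inv_smul_smul₀ (Nat.cast_ne_zero.2 hn) y

theorem sub_cesaroMean_mem_range {n : ℕ} (hn : n ≠ 0) (x : E) :
    x - cesaroMean T n x ∈ LinearMap.range (1 - (T : E →ₗ[ℂ] E)) := by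
  have hpow (m : ℕ) : x - (T ^ m) x ∈ LinearMap.range (1 - (T : E →ₗ[ℂ] E)) :=
    ⟨(∑ k ∈ Finset.range m, T ^ k) x, by
      simpa using congrArg (fun S : E →L[ℂ] E => S x) (mul_neg_geom_sum T m)⟩
  have h : x - cesaroMean T n x = (n : ℂ)⁻¹ • ∑ m ∈ Finset.Icc 1 n, (x - (T ^ m) x) := by
    rw [Finset.sum_sub_distrib, smul_sub, Finset.sum_const, Nat.card_Icc, add_tsub_cancel_right,
      ← Nat.cast_smul_eq_nsmul ℂ, inv_smul_smul₀ (Nat.cast_ne_zero.2 hn), cesaroMean]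
  rw [h]
  exact Submodule.smul_mem _ _ (Submodule.sum_mem _ fun m _ => hpow m)

variable [ContinuousConstSMul ℂ E]

noncomputable def cesaroOp (n : ℕ) : E →L[ℂ] E :=
  (n : ℂ)⁻¹ • ∑ m ∈ Finset.Icc 1 n, T ^ m

@[simp]
theorem coe_cesaroOp (n : ℕ) : ⇑(cesaroOp T n) = cesaroMean T n := by
  ext x
  simp [cesaroOp, cesaroMean]

end Cesaro

section Limits

variable {E : Type*} [AddCommGroup E] [Module ℂ E] [TopologicalSpace E] [IsTopologicalAddGroup E]
  [ContinuousSMul ℂ E] {T : E →L[ℂ] E}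

theorem tendsto_cesaroMean_sub_apply {x : E}
    (hx : Tendsto (fun n : ℕ => (n : ℂ)⁻¹ • (T ^ n) x) atTop (𝓝 0)) :
    Tendsto (fun n => cesaroMean T n (x - T x)) atTop (𝓝 0) := by
  have h : Tendsto (fun n : ℕ => (n : ℂ)⁻¹ • x - (n : ℂ)⁻¹ • (T ^ n) x) atTop (𝓝 0) := by
    simpa using ((tendsto_inv_atTop_nhds_zero_nat (𝕜 := ℂ)).smul_const x).sub hx
  simp_rw [cesaroMean_sub_apply, smul_sub]
  exact (T.continuous.tendsto' 0 0 (map_zero T)).comp h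

theorem tendsto_inv_smul_pow_apply_of_tendsto_cesaroMean {x y : E}
    (h : Tendsto (fun n => cesaroMean T (n + 1) x) atTop (𝓝 y)) :
    Tendsto (fun n : ℕ => (n : ℂ)⁻¹ • (T ^ n) x) atTop (𝓝 0) := by
  rw [← tendsto_add_atTop_iff_nat 1]
  have h' := h.sub <| (tendsto_natCast_div_add_atTop (1 : ℂ)).smul <|
    (tendsto_add_atTop_iff_nat (f := fun n => cesaroMean T n x) 1).1 h
  rw [one_smul, sub_self] at h'
  simpa only [cesaroMean_add_one_sub_smul_cesaroMean, Nat.cast_add_one] using h'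

end Limits

section CesaroBounded

variable {E : Type*} [AddCommGroup E] [Module ℂ E] [UniformSpace E] [IsUniformAddGroup E]
  [ContinuousSMul ℂ E] {T : E →L[ℂ] E}

theorem tendsto_cesaroMean_of_mem_closure_range
    (hA : Equicontinuous fun n => cesaroMean T (n + 1))
    (hC : ∀ x, Tendsto (fun n : ℕ => (n : ℂ)⁻¹ • (T ^ n) x) atTop (𝓝 0)) {z : E}
    (hz : z ∈ closure (LinearMap.range (1 - (T : E →ₗ[ℂ] E)) : Set E)) :
    Tendsto (fun n => cesaroMean T (n + 1) z) atTop (𝓝 0) := by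
  refine closure_minimal ?_ (hA.isClosed_setOfPred_tendsto (f := 0) continuous_const) hz
  rintro - ⟨u, rfl⟩
  simpa using (tendsto_add_atTop_iff_nat 1).2 (tendsto_cesaroMean_sub_apply (hC u))

theorem exists_mapClusterPt_cesaroMean
    (hreflexive : ∀ s : Set E, IsVonNBounded ℂ s → IsCompact (closure (toWeakSpace ℂ E '' s)))
    (hA : Equicontinuous fun n => cesaroMean T (n + 1)) (x : E) :
    ∃ y, MapClusterPt (toWeakSpace ℂ E y) atTop
      (toWeakSpace ℂ E ∘ fun n => cesaroMean T (n + 1) x) := by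
  have hbdd : IsVonNBounded ℂ (range fun n => cesaroMean T (n + 1) x) := by
    simpa using Equicontinuous.isVonNBounded_range_apply
      (A := fun n => cesaroOp T (n + 1)) (by simpa using hA) x
  obtain ⟨y, -, hy⟩ := (hreflexive _ hbdd).exists_mapClusterPt_of_frequently
    (f := toWeakSpace ℂ E ∘ fun n => cesaroMean T (n + 1) x) (l := atTop) <|
      .of_forall fun n => subset_closure (mem_image_of_mem _ (mem_range_self n))
  exact ⟨(toWeakSpace ℂ E).symm y, by simpa using hy⟩

end CesaroBounded

section Reflexive

variable {E : Type*} [AddCommGroup E] [Module ℂ E] [Module ℝ E] [IsScalarTower ℝ ℂ E]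
  [UniformSpace E] [IsUniformAddGroup E] [ContinuousSMul ℂ E] [LocallyConvexSpace ℝ E]
  {T : E →L[ℂ] E} {x y : E}

theorem sub_mem_closure_range_of_mapClusterPt_cesaroMean
    (hy : MapClusterPt (toWeakSpace ℂ E y) atTop
      (toWeakSpace ℂ E ∘ fun n => cesaroMean T (n + 1) x)) :
    x - y ∈ closure (LinearMap.range (1 - (T : E →ₗ[ℂ] E)) : Set E) := by
  have hxy : MapClusterPt (toWeakSpace ℂ E (x - y)) atTop
      (toWeakSpace ℂ E ∘ fun n => x - cesaroMean T (n + 1) x) :=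
    hy.continuousAt_comp (f := fun w => toWeakSpace ℂ E x - w)
      (continuous_const.sub continuous_id).continuousAt
  exact mem_closure_of_mapClusterPt_toWeakSpace hxy
    ((LinearMap.range (1 - (T : E →ₗ[ℂ] E))).restrictScalars ℝ).convex
    (.of_forall fun n => sub_cesaroMean_mem_range T n.succ_ne_zero x)

variable [T2Space E]

theorem apply_eq_of_mapClusterPt_cesaroMean
    (hx : Tendsto (fun n : ℕ => (n : ℂ)⁻¹ • (T ^ n) x) atTop (𝓝 0))
    (hy : MapClusterPt (toWeakSpace ℂ E y) atTop
      (toWeakSpace ℂ E ∘ fun n => cesaroMean T (n + 1) x)) :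
    T y = y := by
  have : ContinuousSMul ℝ E := IsScalarTower.continuousSMul ℂ
  have : SeparatingDual ℂ E := .of_real
  rw [← sub_eq_zero]
  refine eq_of_mapClusterPt_toWeakSpace_of_tendsto hy (S := T - 1) ?_
  have h := ((tendsto_add_atTop_iff_nat 1).2 (tendsto_cesaroMean_sub_apply hx)).neg
  rw [neg_zero] at h
  refine h.congr fun n => ?_
  show _ = T (cesaroMean T (n + 1) x) - cesaroMean T (n + 1) x
  rw [apply_cesaroMean, ← coe_cesaroOp, map_sub, neg_sub]

theorem tendsto_cesaroMean_of_mapClusterPt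
    (hA : Equicontinuous fun n => cesaroMean T (n + 1))
    (hC : ∀ x, Tendsto (fun n : ℕ => (n : ℂ)⁻¹ • (T ^ n) x) atTop (𝓝 0))
    (hy : MapClusterPt (toWeakSpace ℂ E y) atTop
      (toWeakSpace ℂ E ∘ fun n => cesaroMean T (n + 1) x)) :
    Tendsto (fun n => cesaroMean T (n + 1) x) atTop (𝓝 y) := by
  have hTy := apply_eq_of_mapClusterPt_cesaroMean (hC x) hy
  have h := (tendsto_cesaroMean_of_mem_closure_range hA hC
    (sub_mem_closure_range_of_mapClusterPt_cesaroMean hy)).add_const y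
  rw [zero_add] at h
  refine h.congr fun n => ?_
  rw [← coe_cesaroOp, map_sub, coe_cesaroOp, cesaroMean_of_apply_eq T hTy n.succ_ne_zero,
    sub_add_cancel]

end Reflexive

/-- On a reflexive locally convex Hausdorff space, an operator is mean ergodic if and only if
it is Cesàro bounded and `(1/n) Tⁿ x → 0` for every `x`. -/
theorem stmt2 {E : Type*} [AddCommGroup E] [Module ℂ E] [Module ℝ E] [IsScalarTower ℝ ℂ E]
    [UniformSpace E] [IsUniformAddGroup E] [ContinuousSMul ℂ E]
    [LocallyConvexSpace ℝ E] [T2Space E]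
    -- `E` is barrelled: every pointwise bounded family of continuous linear operators on `E`
    -- is equicontinuous (Banach–Steinhaus property)
    (hbarrelled : ∀ (ι : Type) (f : ι → E →L[ℂ] E),
      (∀ x : E, Bornology.IsVonNBounded ℂ (Set.range fun i => f i x)) →
        Equicontinuous fun i => ⇑(f i))
    -- every bounded subset of `E` is relatively compact in the weak topology `σ(E,E′)`
    (hreflexive : ∀ s : Set E, Bornology.IsVonNBounded ℂ s →
      IsCompact (closure (toWeakSpace ℂ E '' s)))
    (T : E →L[ℂ] E) :
    -- `T` is mean ergodic
    (∃ P : E →L[ℂ] E, ∀ x : E,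
        Tendsto (fun n : ℕ => cesaroMean T (n + 1) x) atTop (𝓝 (P x))) ↔
      -- `T` is Cesàro bounded and `(1/n) Tⁿ x → 0` for every `x`
      (Equicontinuous fun n : ℕ => cesaroMean T (n + 1)) ∧
        ∀ x : E, Tendsto (fun n : ℕ => (n : ℂ)⁻¹ • (T ^ n) x) atTop (𝓝 (0 : E)) := by
  constructor
  · rintro ⟨P, hP⟩
    refine ⟨?_, fun x => tendsto_inv_smul_pow_apply_of_tendsto_cesaroMean (hP x)⟩
    simpa using hbarrelled ℕ (fun n => cesaroOp T (n + 1)) fun x => by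
      simpa using (hP x).isVonNBounded_range ℂ
  · rintro ⟨hA, hC⟩
    have hA' : Equicontinuous fun n => ⇑(cesaroOp T (n + 1)) := by simpa using hA
    simpa using hA'.exists_continuousLinearMap_of_tendsto fun x => by
      obtain ⟨y, hy⟩ := exists_mapClusterPt_cesaroMean hreflexive hA x
      exact ⟨y, by simpa using tendsto_cesaroMean_of_mapClusterPt hA hC hy⟩
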